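/- arXiv:1702.02791 — 10 statements merged into one kernel-verified Lean document; each statement's English description precedes it below -/
import Mathlib

section
/- In a topological semilattice X, the interior of any upper set U ⊆ X is itself an upper set. -/
/-- In a topological semilattice, the interior of any upper set is an upper set. -/
theorem interior_upper_set {X : Type*} [TopologicalSpace X] [SemilatticeInf X]
    (hcont : Continuous fun p : X × X => p.1 ⊓ p.2)
    (U : Set X) (hU : IsUpperSet U) :
    IsUpperSet (interior U) := by
  intro x y hxy hx
  have hf : Continuous fun z : X => x ⊓ z :=
    hcont.comp (continuous_const.prodMk continuous_id)
  rw [mem_interior]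
  refine ⟨(fun z : X => x ⊓ z) ⁻¹' interior U, ?_, hf.isOpen_preimage _ isOpen_interior, ?_⟩
  · intro z hz
    exact hU inf_le_right (interior_subset hz)
  · simpa [Set.mem_preimage, inf_eq_left.mpr hxy] using hx
end

section
/- Let X be a Hausdorff topological semilattice such that for every chain C ⊆ X possessing a supremum in X, sup C belongs to the closure of ↓C. Then X is chain-continuous: for every x ∈ X and every chain C with sup C existing, x·(sup C) = sup(x·C). -/
/-- If in a Hausdorff topological semilattice every chain `C` with a supremum
satisfies `sup C ∈ closure (↓C)`, then the semilattice is chain-continuous. -/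
theorem chain_continuous_of_sup_in_closure {X : Type*} [TopologicalSpace X] [T2Space X]
    [SemilatticeInf X]
    (hcont : Continuous fun p : X × X => p.1 ⊓ p.2)
    (h : ∀ C : Set X, IsChain (· ≤ ·) C → ∀ s : X, IsLUB C s →
      s ∈ closure {z : X | ∃ c ∈ C, z ≤ c}) :
    ∀ (x : X) (C : Set X), IsChain (· ≤ ·) C → ∀ s : X, IsLUB C s →
      IsLUB ((fun c => x ⊓ c) '' C) (x ⊓ s) := by
  intro x C hC s hs
  constructor
  · rintro _ ⟨c, hc, rfl⟩
    exact inf_le_inf_left x (hs.1 hc)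
  · intro b hb
    have hA : IsClosed {z : X | x ⊓ z ≤ b} := by
      have : {z : X | x ⊓ z ≤ b} = {z : X | (x ⊓ z) ⊓ b = x ⊓ z} := by
        ext z; simp [inf_eq_left]
      rw [this]
      exact isClosed_eq
        (hcont.comp ((hcont.comp (continuous_const.prodMk continuous_id)).prodMk
          continuous_const))
        (hcont.comp (continuous_const.prodMk continuous_id))
    have hsub : {z : X | ∃ c ∈ C, z ≤ c} ⊆ {z : X | x ⊓ z ≤ b} := by
      rintro z ⟨c, hc, hzc⟩
      exact le_trans (inf_le_inf_left x hzc) (hb ⟨c, hc, rfl⟩)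
    exact closure_minimal hsub hA (h C hC s hs)
end

section
/- Let X be a chain-complete semilattice and A, B ⊆ X. If a = inf of some countable chain in A and b = inf of some countable chain in B, then a·b is the inf of some countable chain in A·B. In other words, ↓̄A · ↓̄B ⊆ ↓̄(A·B), where ↓̄S = {inf C : C a countable chain in S}. -/
/-- `X` is chain-complete if every non-empty chain has an inf and a sup in `X`. -/
def ChainComplete (X : Type*) [SemilatticeInf X] : Prop :=
  ∀ C : Set X, IsChain (· ≤ ·) C → C.Nonempty →
    (∃ a : X, IsGLB C a) ∧ (∃ b : X, IsLUB C b)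

/-- `↓̄S` — the set of infima of non-empty countable chains contained in `S`. -/
def dBar {X : Type*} [SemilatticeInf X] (S : Set X) : Set X :=
  {a : X | ∃ C : Set X, C ⊆ S ∧ C.Countable ∧ C.Nonempty ∧ IsChain (· ≤ ·) C ∧ IsGLB C a}

/-- Partial infima of a sequence. -/
def dBarSeq {X : Type*} [SemilatticeInf X] (f : ℕ → X) : ℕ → X
  | 0 => f 0
  | n + 1 => dBarSeq f n ⊓ f (n + 1)

lemma dBarSeq_le {X : Type*} [SemilatticeInf X] (f : ℕ → X) (n : ℕ) :
    dBarSeq f n ≤ f n := by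
  cases n with
  | zero => exact le_refl _
  | succ n => exact inf_le_right

lemma dBarSeq_antitone {X : Type*} [SemilatticeInf X] (f : ℕ → X) :
    Antitone (dBarSeq f) :=
  antitone_nat_of_succ_le fun n => inf_le_left

lemma dBarSeq_mem {X : Type*} [SemilatticeInf X] {C : Set X} (hC : IsChain (· ≤ ·) C)
    (f : ℕ → X) (hf : ∀ n, f n ∈ C) (n : ℕ) : dBarSeq f n ∈ C := by
  induction n with
  | zero => exact hf 0
  | succ n ih =>
    rcases eq_or_ne (dBarSeq f n) (f (n + 1)) with h | h
    · simpa [dBarSeq, h] using hf (n + 1)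
    · rcases hC ih (hf (n + 1)) h with h' | h'
      · simpa [dBarSeq, inf_eq_left.mpr h'] using ih
      · simpa [dBarSeq, inf_eq_right.mpr h'] using hf (n + 1)

/-- In a chain-complete semilattice, `↓̄A · ↓̄B ⊆ ↓̄(A·B)`. -/
theorem dBar_mul_dBar_subset {X : Type*} [SemilatticeInf X]
    (hX : ChainComplete X) (A B : Set X) :
    Set.image2 (· ⊓ ·) (dBar A) (dBar B) ⊆ dBar (Set.image2 (· ⊓ ·) A B) := by
  rintro x ⟨a, ⟨C, hCA, hCc, hCne, hCch, hCa⟩, b, ⟨D, hDB, hDc, hDne, hDch, hDb⟩, rfl⟩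
  obtain ⟨f, hf⟩ := Set.Countable.exists_eq_range hCc hCne
  obtain ⟨g, hg⟩ := Set.Countable.exists_eq_range hDc hDne
  have hfC : ∀ n, f n ∈ C := fun n => hf ▸ Set.mem_range_self n
  have hgD : ∀ n, g n ∈ D := fun n => hg ▸ Set.mem_range_self n
  set e : ℕ → X := fun n => dBarSeq f n ⊓ dBarSeq g n with he
  refine ⟨Set.range e, ?_, Set.countable_range e, Set.range_nonempty e, ?_, ?_, ?_⟩
  · rintro _ ⟨n, rfl⟩
    exact ⟨dBarSeq f n, hCA (dBarSeq_mem hCch f hfC n),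
      dBarSeq g n, hDB (dBarSeq_mem hDch g hgD n), rfl⟩
  · have hmono : Antitone e := fun m n hmn =>
      inf_le_inf (dBarSeq_antitone f hmn) (dBarSeq_antitone g hmn)
    rintro _ ⟨m, rfl⟩ _ ⟨n, rfl⟩ _
    rcases le_total m n with h | h
    · exact Or.inr (hmono h)
    · exact Or.inl (hmono h)
  · rintro _ ⟨n, rfl⟩
    exact inf_le_inf (hCa.1 (dBarSeq_mem hCch f hfC n)) (hDb.1 (dBarSeq_mem hDch g hgD n))
  · intro z hz
    have hza : z ≤ a := by
      refine hCa.2 fun c hc => ?_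
      obtain ⟨n, rfl⟩ := hf ▸ hc
      exact le_trans (hz (Set.mem_range_self n)) (le_trans inf_le_left (dBarSeq_le f n))
    have hzb : z ≤ b := by
      refine hDb.2 fun d hd => ?_
      obtain ⟨n, rfl⟩ := hg ▸ hd
      exact le_trans (hz (Set.mem_range_self n)) (le_trans inf_le_right (dBarSeq_le g n))
    exact le_inf hza hzb
end

section
/- Let X be a chain-continuous, chain-complete semilattice and (V_n)_{n∈ω} a decreasing sequence of non-empty subsets of X with V_{n+1}·V_{n+1} ⊆ V_n for all n. Then the set L = ⋂_n ↑̄↓̄V_n is a non-empty subsemilattice of X, where ↓̄S = {inf C : C a countable chain in S} and ↑̄S = {sup C : C a countable chain in S}. -/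
/-- `X` is chain-continuous if `x ⊓ sup C = sup (x ⊓ C)` for every chain `C`
possessing a supremum. -/
def ChainContinuous (X : Type*) [SemilatticeInf X] : Prop :=
  ∀ (x : X) (C : Set X), IsChain (· ≤ ·) C → ∀ s : X, IsLUB C s →
    IsLUB ((fun c => x ⊓ c) '' C) (x ⊓ s)

/-- `↑̄S` — the set of suprema of non-empty countable chains contained in `S`. -/
def uBar {X : Type*} [SemilatticeInf X] (S : Set X) : Set X :=
  {a : X | ∃ C : Set X, C ⊆ S ∧ C.Countable ∧ C.Nonempty ∧ IsChain (· ≤ ·) C ∧ IsLUB C a}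


section Helpers

variable {X : Type*} [SemilatticeInf X]

/-- Partial infima of a sequence. -/
noncomputable def pInf (f : ℕ → X) : ℕ → X
  | 0 => f 0
  | k+1 => pInf f k ⊓ f (k+1)

/-- Partial maxima of a sequence (meaningful when the range is a chain). -/
noncomputable def pMax (f : ℕ → X) : ℕ → X
  | 0 => f 0
  | k+1 =>
    letI := Classical.dec (f (k+1) ≤ pMax f k)
    if f (k+1) ≤ pMax f k then pMax f k else f (k+1)

lemma pInf_le (f : ℕ → X) : ∀ {i k : ℕ}, i ≤ k → pInf f k ≤ f i := by
  intro i k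
  induction k with
  | zero => intro h; simp [Nat.le_zero.mp h, pInf]
  | succ k ih =>
    intro h
    rcases eq_or_lt_of_le h with h' | h'
    · subst h'; exact inf_le_right
    · exact le_trans inf_le_left (ih (Nat.lt_succ_iff.mp h'))

lemma le_pInf (f : ℕ → X) {x : X} (hx : ∀ i, x ≤ f i) (k : ℕ) : x ≤ pInf f k := by
  induction k with
  | zero => exact hx 0
  | succ k ih => exact le_inf ih (hx (k+1))

lemma pInf_antitone (f : ℕ → X) : Antitone (pInf f) := by
  apply antitone_nat_of_succ_le
  intro k; exact inf_le_left

lemma pInf_mem (f : ℕ → X) (hch : IsChain (· ≤ ·) (Set.range f)) (k : ℕ) :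
    pInf f k ∈ Set.range f := by
  induction k with
  | zero => exact ⟨0, rfl⟩
  | succ k ih =>
    rcases hch.total ih (Set.mem_range_self (k+1)) with h | h
    · show pInf f k ⊓ f (k+1) ∈ _; rw [inf_eq_left.mpr h]; exact ih
    · show pInf f k ⊓ f (k+1) ∈ _; rw [inf_eq_right.mpr h]; exact ⟨k+1, rfl⟩

lemma pMax_mem (f : ℕ → X) (k : ℕ) : pMax f k ∈ Set.range f := by
  induction k with
  | zero => exact ⟨0, rfl⟩
  | succ k ih =>
    show (letI := Classical.dec (f (k+1) ≤ pMax f k);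
      if f (k+1) ≤ pMax f k then pMax f k else f (k+1)) ∈ _
    split_ifs with h
    · exact ih
    · exact ⟨k+1, rfl⟩

lemma pMax_monotone (f : ℕ → X) (hch : IsChain (· ≤ ·) (Set.range f)) :
    Monotone (pMax f) := by
  apply monotone_nat_of_le_succ
  intro k
  show pMax f k ≤ (letI := Classical.dec (f (k+1) ≤ pMax f k);
      if f (k+1) ≤ pMax f k then pMax f k else f (k+1))
  split_ifs with h
  · exact le_rfl
  · rcases hch.total (pMax_mem f k) (Set.mem_range_self (k+1)) with h' | h'
    · exact h'
    · exact absurd h' h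

lemma le_pMax (f : ℕ → X) (hch : IsChain (· ≤ ·) (Set.range f)) :
    ∀ {i k : ℕ}, i ≤ k → f i ≤ pMax f k := by
  intro i k
  induction k with
  | zero => intro h; simp [Nat.le_zero.mp h, pMax]
  | succ k ih =>
    intro h
    rcases eq_or_lt_of_le h with h' | h'
    · subst h'
      show f (k+1) ≤ (letI := Classical.dec (f (k+1) ≤ pMax f k);
        if f (k+1) ≤ pMax f k then pMax f k else f (k+1))
      split_ifs with hh
      · exact hh
      · exact le_rfl
    · exact le_trans (ih (Nat.lt_succ_iff.mp h'))
        (pMax_monotone f hch (Nat.le_succ k))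

lemma monotone_isChain_range {f : ℕ → X} (hf : Monotone f) :
    IsChain (· ≤ ·) (Set.range f) := by
  rintro _ ⟨i, rfl⟩ _ ⟨j, rfl⟩ _
  rcases le_total i j with h | h
  · exact Or.inl (hf h)
  · exact Or.inr (hf h)

lemma antitone_isChain_range {f : ℕ → X} (hf : Antitone f) :
    IsChain (· ≤ ·) (Set.range f) := by
  rintro _ ⟨i, rfl⟩ _ ⟨j, rfl⟩ _
  rcases le_total i j with h | h
  · exact Or.inr (hf h)
  · exact Or.inl (hf h)

lemma dBar_mono {S T : Set X} (h : S ⊆ T) : dBar S ⊆ dBar T := by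
  rintro a ⟨C, hCS, h1, h2, h3, h4⟩
  exact ⟨C, hCS.trans h, h1, h2, h3, h4⟩

lemma uBar_mono {S T : Set X} (h : S ⊆ T) : uBar S ⊆ uBar T := by
  rintro a ⟨C, hCS, h1, h2, h3, h4⟩
  exact ⟨C, hCS.trans h, h1, h2, h3, h4⟩

/-- Key lemma A: `dBar S ⊓ dBar T ⊆ dBar (S ⊓ T)`. -/
lemma inf_mem_dBar {S T : Set X} {a b : X}
    (ha : a ∈ dBar S) (hb : b ∈ dBar T) :
    a ⊓ b ∈ dBar (Set.image2 (· ⊓ ·) S T) := by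
  obtain ⟨C, hCS, hCc, hCne, hCch, hCglb⟩ := ha
  obtain ⟨D, hDT, hDc, hDne, hDch, hDglb⟩ := hb
  obtain ⟨c, rfl⟩ := hCc.exists_eq_range hCne
  obtain ⟨d, rfl⟩ := hDc.exists_eq_range hDne
  refine ⟨Set.range (fun k => pInf c k ⊓ pInf d k), ?_, Set.countable_range _,
    Set.range_nonempty _, ?_, ?_, ?_⟩
  · rintro _ ⟨k, rfl⟩
    exact Set.mem_image2_of_mem (hCS (pInf_mem c hCch k)) (hDT (pInf_mem d hDch k))
  · exact antitone_isChain_range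
      (fun i j h => inf_le_inf (pInf_antitone c h) (pInf_antitone d h))
  · rintro _ ⟨k, rfl⟩
    exact inf_le_inf (le_pInf c (fun i => hCglb.1 ⟨i, rfl⟩) k)
      (le_pInf d (fun i => hDglb.1 ⟨i, rfl⟩) k)
  · intro x hx
    refine le_inf (hCglb.2 ?_) (hDglb.2 ?_)
    · rintro _ ⟨i, rfl⟩
      exact le_trans (hx ⟨i, rfl⟩) (le_trans inf_le_left (pInf_le c le_rfl))
    · rintro _ ⟨i, rfl⟩
      exact le_trans (hx ⟨i, rfl⟩) (le_trans inf_le_right (pInf_le d le_rfl))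

/-- Key lemma B: using chain-continuity, `uBar P ⊓ uBar Q ⊆ uBar (P ⊓ Q)`. -/
lemma inf_mem_uBar (hcc : ChainContinuous X) {P Q : Set X} {a b : X}
    (ha : a ∈ uBar P) (hb : b ∈ uBar Q) :
    a ⊓ b ∈ uBar (Set.image2 (· ⊓ ·) P Q) := by
  obtain ⟨A, hAP, hAc, hAne, hAch, hAlub⟩ := ha
  obtain ⟨B, hBQ, hBc, hBne, hBch, hBlub⟩ := hb
  obtain ⟨f, rfl⟩ := hAc.exists_eq_range hAne
  obtain ⟨g, rfl⟩ := hBc.exists_eq_range hBne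
  refine ⟨Set.range (fun k => pMax f k ⊓ pMax g k), ?_, Set.countable_range _,
    Set.range_nonempty _, ?_, ?_, ?_⟩
  · rintro _ ⟨k, rfl⟩
    exact Set.mem_image2_of_mem (hAP (pMax_mem f k)) (hBQ (pMax_mem g k))
  · exact monotone_isChain_range
      (fun i j h => inf_le_inf (pMax_monotone f hAch h) (pMax_monotone g hBch h))
  · rintro _ ⟨k, rfl⟩
    obtain ⟨i, hi⟩ := pMax_mem f k
    obtain ⟨j, hj⟩ := pMax_mem g k
    exact inf_le_inf (hi ▸ hAlub.1 ⟨i, rfl⟩) (hj ▸ hBlub.1 ⟨j, rfl⟩)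
  · intro x hx
    have hfg : ∀ i j, f i ⊓ g j ≤ x := by
      intro i j
      refine le_trans (inf_le_inf (le_pMax f hAch (le_max_left i j))
        (le_pMax g hBch (le_max_right i j))) (hx ⟨max i j, rfl⟩)
    have h1 : ∀ i, f i ⊓ b ≤ x := by
      intro i
      refine (hcc (f i) _ hBch b hBlub).2 ?_
      rintro _ ⟨_, ⟨j, rfl⟩, rfl⟩
      exact hfg i j
    have h2 : b ⊓ a ≤ x := by
      refine (hcc b _ hAch a hAlub).2 ?_
      rintro _ ⟨_, ⟨i, rfl⟩, rfl⟩
      show b ⊓ f i ≤ x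
      rw [inf_comm]
      exact h1 i
    rwa [inf_comm] at h2

/-- The diagonal product sequence: `qSeq x k n = x (n+1) ⊓ x (n+2) ⊓ ⋯ ⊓ x (n+k+1)`. -/
noncomputable def qSeq (x : ℕ → X) : ℕ → ℕ → X
  | 0 => fun n => x (n+1)
  | k+1 => fun n => x (n+1) ⊓ qSeq x k (n+1)

end Helpers

/-- For a decreasing sequence `(Vₙ)` of non-empty sets with `Vₙ₊₁·Vₙ₊₁ ⊆ Vₙ`
in a chain-continuous chain-complete semilattice, `L = ⋂ₙ ↑̄↓̄Vₙ` is a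
non-empty subsemilattice. -/
theorem inter_uBar_dBar_nonempty_subsemilattice {X : Type*} [SemilatticeInf X]
    (hcc : ChainContinuous X) (hcompl : ChainComplete X)
    (V : ℕ → Set X) (hne : ∀ n, (V n).Nonempty)
    (hdec : ∀ n, V (n + 1) ⊆ V n)
    (hmul : ∀ n, Set.image2 (· ⊓ ·) (V (n + 1)) (V (n + 1)) ⊆ V n) :
    (⋂ n, uBar (dBar (V n))).Nonempty ∧
      ∀ a ∈ ⋂ n, uBar (dBar (V n)), ∀ b ∈ ⋂ n, uBar (dBar (V n)),
        a ⊓ b ∈ ⋂ n, uBar (dBar (V n)) := by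
  classical
  -- decreasing property of V
  have hV : ∀ {n m : ℕ}, n ≤ m → V m ⊆ V n := by
    intro n m h
    induction h with
    | refl => exact subset_rfl
    | step h ih => exact (hdec _).trans ih
  -- choose points
  choose x hx using hne
  -- the diagonal products lie in the right V's
  have hq : ∀ (k n : ℕ), qSeq x k n ∈ V n := by
    intro k
    induction k with
    | zero => intro n; exact hdec n (hx (n+1))
    | succ k ih =>
      intro n
      exact hmul n (Set.mem_image2_of_mem (hx (n+1)) (ih (n+1)))
  have hqanti : ∀ n, Antitone (fun k => qSeq x k n) := by
    intro n
    apply antitone_nat_of_succ_le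
    intro k
    revert n
    induction k with
    | zero => intro n; exact inf_le_left
    | succ k ih => intro n; exact inf_le_inf_left _ (ih (n+1))
  have hqstep : ∀ k n, qSeq x (k+1) n ≤ qSeq x k (n+1) := fun k n => inf_le_right
  -- infima a n of the diagonal chains
  have haux : ∀ n : ℕ, ∃ a : X, IsGLB (Set.range (fun k => qSeq x k n)) a := by
    intro n
    exact ((hcompl _ (antitone_isChain_range (hqanti n)) (Set.range_nonempty _)).1)
  choose a haglb using haux
  have haDBar : ∀ n, a n ∈ dBar (V n) := by
    intro n
    exact ⟨_, by rintro _ ⟨k, rfl⟩; exact hq k n, Set.countable_range _,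
      Set.range_nonempty _, antitone_isChain_range (hqanti n), haglb n⟩
  have hamono : Monotone a := by
    apply monotone_nat_of_le_succ
    intro n
    refine (haglb (n+1)).2 ?_
    rintro _ ⟨k, rfl⟩
    exact le_trans ((haglb n).1 ⟨k+1, rfl⟩) (hqstep k n)
  -- the supremum s of the a's
  obtain ⟨-, s, hslub⟩ := hcompl (Set.range a) (monotone_isChain_range hamono)
    (Set.range_nonempty _)
  have hsL : s ∈ ⋂ n, uBar (dBar (V n)) := by
    rw [Set.mem_iInter]
    intro n
    refine ⟨Set.range (fun k => a (n + k)), ?_, Set.countable_range _,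
      Set.range_nonempty _, ?_, ?_, ?_⟩
    · rintro _ ⟨k, rfl⟩
      exact dBar_mono (hV (Nat.le_add_right n k)) (haDBar (n + k))
    · exact monotone_isChain_range (fun i j h => hamono (Nat.add_le_add_left h n))
    · rintro _ ⟨k, rfl⟩
      exact hslub.1 ⟨n + k, rfl⟩
    · intro y hy
      refine hslub.2 ?_
      rintro _ ⟨m, rfl⟩
      exact le_trans (hamono (Nat.le_add_left m n)) (hy ⟨m, rfl⟩)
  refine ⟨⟨s, hsL⟩, ?_⟩
  intro p hp q hq'
  rw [Set.mem_iInter]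
  intro n
  rw [Set.mem_iInter] at hp hq'
  have hp1 := hp (n + 1)
  have hq1 := hq' (n + 1)
  have key := inf_mem_uBar hcc hp1 hq1
  refine uBar_mono ?_ key
  intro z hz
  obtain ⟨u, hu, v, hv, rfl⟩ := hz
  exact dBar_mono (hmul n) (inf_mem_dBar hu hv)
end

section
/- Every Hausdorff topological lattice is down-open: for every open set U, the lower set ↓U is open. -/
/-- Every Hausdorff topological lattice is down-open: for every open `U`,
the lower set `↓U` is open. -/
theorem topological_lattice_down_open {X : Type*} [TopologicalSpace X] [T2Space X]
    [Lattice X]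
    (hinf : Continuous fun p : X × X => p.1 ⊓ p.2)
    (hsup : Continuous fun p : X × X => p.1 ⊔ p.2)
    (U : Set X) (hU : IsOpen U) :
    IsOpen {z : X | ∃ u ∈ U, z ≤ u} := by
  rw [isOpen_iff_mem_nhds]
  rintro z ⟨u, hu, hzu⟩
  have hf : Continuous fun w : X => w ⊔ u :=
    hsup.comp (continuous_id.prodMk continuous_const)
  have h1 : (fun w : X => w ⊔ u) ⁻¹' U ∈ nhds z := by
    apply hf.continuousAt.preimage_mem_nhds
    simpa [sup_eq_right.mpr hzu] using hU.mem_nhds hu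
  filter_upwards [h1] with w hw
  exact ⟨w ⊔ u, hw, le_sup_left⟩
end

section
/- A down-open Hausdorff topological semilattice X is well-separated: for any points x < y there exists a neighborhood V of y such that x ∉ ↑cl(↑cl(↑V)). -/
/-- The upper set generated by `A`. -/
def upSet {X : Type*} [Preorder X] (A : Set X) : Set X := {z : X | ∃ a ∈ A, a ≤ z}

/-- The lower set generated by `A`. -/
def downSet {X : Type*} [Preorder X] (A : Set X) : Set X := {z : X | ∃ a ∈ A, z ≤ a}

lemma downSet_lower {X : Type*} [Preorder X] {S : Set X} {a b : X}
    (hab : a ≤ b) (hb : b ∈ downSet S) : a ∈ downSet S := by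
  obtain ⟨c, hc, hbc⟩ := hb
  exact ⟨c, hc, hab.trans hbc⟩

/-- A down-open Hausdorff topological semilattice is well-separated: for
`x < y` there is an open neighborhood `V` of `y` with
`x ∉ ↑cl(↑cl(↑V))`. -/
theorem down_open_well_separated {X : Type*} [TopologicalSpace X] [T2Space X]
    [SemilatticeInf X]
    (hcont : Continuous fun p : X × X => p.1 ⊓ p.2)
    (hdo : ∀ U : Set X, IsOpen U → IsOpen (downSet U)) :
    ∀ x y : X, x < y → ∃ V : Set X, IsOpen V ∧ y ∈ V ∧
      x ∉ upSet (closure (upSet (closure (upSet V)))) := by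
  intro x y hxy
  obtain ⟨U₀, V₀, hU₀, hV₀, hxU₀, hyV₀, hUV⟩ := t2_separation hxy.ne
  -- continuity of ⊓ at (x, y); x ⊓ y = x ∈ U₀
  have hmem : (x, y) ∈ (fun p : X × X => p.1 ⊓ p.2) ⁻¹' U₀ := by
    simpa [inf_eq_left.mpr hxy.le] using hxU₀
  obtain ⟨A, B, hA, hB, hxA, hyB, hAB⟩ :=
    isOpen_prod_iff.mp (hU₀.preimage hcont) x y hmem
  refine ⟨V₀ ∩ B, hV₀.inter hB, ⟨hyV₀, hyB⟩, ?_⟩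
  set V : Set X := V₀ ∩ B with hVdef
  set W : Set X := downSet (U₀ ∩ A) with hWdef
  have hWopen : IsOpen W := hdo _ (hU₀.inter hA)
  have hxW : x ∈ W := ⟨x, ⟨hxU₀, hxA⟩, le_rfl⟩
  have hWV : ∀ z ∈ W, z ∉ V := by
    rintro z ⟨u, ⟨huU, huA⟩, hzu⟩ ⟨hzV₀, hzB⟩
    have : u ⊓ z ∈ U₀ := hAB (Set.mk_mem_prod huA hzB)
    rw [inf_eq_right.mpr hzu] at this
    exact Set.disjoint_left.mp hUV this hzV₀
  -- if an open down-set W is disjoint from S, it is disjoint from upSet S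
  have key : ∀ S : Set X, (∀ z ∈ W, z ∉ S) → ∀ z ∈ W, z ∉ upSet S := by
    rintro S hS z hzW ⟨s, hsS, hsz⟩
    exact hS s (downSet_lower hsz hzW) hsS
  -- and from the closure of upSet S
  have key2 : ∀ S : Set X, (∀ z ∈ W, z ∉ S) → ∀ z ∈ W, z ∉ closure (upSet S) := by
    intro S hS z hzW hz
    obtain ⟨w, hwW, hwUp⟩ := mem_closure_iff.mp hz W hWopen hzW
    exact key S hS w hwW hwUp
  rintro ⟨c, hc, hcx⟩
  have hcW : c ∈ W := downSet_lower hcx hxW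
  exact key2 _ (key2 _ hWV) c hcW hc
end

section
/- If a Hausdorff topological semilattice X admits a continuous injective homomorphism into a well-separated topological semilattice Y, then X is well-separated. -/
/-- A topological semilattice is well-separated if for all `x < y` there is an
open neighborhood `V` of `y` with `x ∉ ↑cl(↑cl(↑V))`. -/
def WellSeparated (X : Type*) [TopologicalSpace X] [SemilatticeInf X] : Prop :=
  ∀ x y : X, x < y → ∃ V : Set X, IsOpen V ∧ y ∈ V ∧
    x ∉ upSet (closure (upSet (closure (upSet V))))

/-- If a Hausdorff topological semilattice admits a continuous injective
homomorphism into a well-separated topological semilattice, then it is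
well-separated. -/
theorem well_separated_of_embedding {X Y : Type*}
    [TopologicalSpace X] [T2Space X] [SemilatticeInf X]
    [TopologicalSpace Y] [SemilatticeInf Y]
    (hcontX : Continuous fun p : X × X => p.1 ⊓ p.2)
    (hcontY : Continuous fun p : Y × Y => p.1 ⊓ p.2)
    (hY : WellSeparated Y)
    (h : X → Y) (hc : Continuous h) (hi : Function.Injective h)
    (hhom : ∀ a b : X, h (a ⊓ b) = h a ⊓ h b) :
    WellSeparated X := by
  intro x y hxy
  have hmono : ∀ a b : X, a ≤ b → h a ≤ h b := by
    intro a b hab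
    have := hhom a b
    rw [inf_eq_left.mpr hab] at this
    exact inf_eq_left.mp this.symm
  have hlt : h x < h y :=
    lt_of_le_of_ne (hmono _ _ hxy.le) (fun e => hxy.ne (hi e))
  obtain ⟨W, hWo, hyW, hxW⟩ := hY _ _ hlt
  have stepUp : ∀ (A : Set X) (B : Set Y), (∀ a ∈ A, h a ∈ B) →
      ∀ z ∈ upSet A, h z ∈ upSet B := by
    rintro A B hAB z ⟨a, ha, haz⟩
    exact ⟨h a, hAB a ha, hmono _ _ haz⟩
  have stepCl : ∀ (A : Set X) (B : Set Y), (∀ a ∈ A, h a ∈ B) →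
      ∀ z ∈ closure A, h z ∈ closure B := by
    intro A B hAB z hz
    exact closure_mono (Set.image_subset_iff.mpr hAB)
      (image_closure_subset_closure_image hc ⟨z, hz, rfl⟩)
  refine ⟨h ⁻¹' W, hWo.preimage hc, hyW, fun hx => hxW ?_⟩
  exact stepUp _ _ (stepCl _ _ (stepUp _ _ (stepCl _ _ (stepUp _ _
    (fun a ha => ha))))) x hx
end

section
/- If X is a k-complete Hausdorff topological semilattice, then X is s-complete: every non-empty subsemilattice S ⊆ X has inf S, and inf S belongs to the closure of ↑S. -/
/-- `X` is k-complete if every non-empty chain has an inf and a sup, both in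
the closure of the chain. -/
def KComplete (X : Type*) [TopologicalSpace X] [SemilatticeInf X] : Prop :=
  ∀ C : Set X, IsChain (· ≤ ·) C → C.Nonempty →
    (∃ a : X, IsGLB C a ∧ a ∈ closure C) ∧ (∃ b : X, IsLUB C b ∧ b ∈ closure C)

/-- `X` is s-complete if every non-empty subsemilattice `S` has
`inf S ∈ cl(↑S)` and every non-empty chain `C` has `sup C ∈ cl(↓C)`. -/
def SComplete (X : Type*) [TopologicalSpace X] [SemilatticeInf X] : Prop :=
  (∀ S : Set X, S.Nonempty → (∀ a ∈ S, ∀ b ∈ S, a ⊓ b ∈ S) →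
    ∃ a : X, IsGLB S a ∧ a ∈ closure (upSet S)) ∧
  (∀ C : Set X, IsChain (· ≤ ·) C → C.Nonempty →
    ∃ b : X, IsLUB C b ∧ b ∈ closure (downSet C))

/-!
Take a maximal chain `C` in the closed subsemilattice `closure S` and let `a = inf C`, which lies
in `closure S` by k-completeness. For any `s ∈ closure S`, the infimum `d` of the chain `C ⊓ s`
again lies in `closure S` and is a lower bound of `C`, so maximality puts `d` into `C`; hence
`a ≤ d ≤ s`. Thus `a` is the least element of `closure S`, and since intervals `[b, ∞)` are closed
in a Hausdorff semilattice with continuous meet, `a` is also the infimum of `S`.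
-/

open Set

theorem IsMaxChain.mem_of_mem_lowerBounds {α : Type*} [Preorder α] {M : Set α}
    (hM : IsMaxChain (· ≤ ·) M) {a : α} (ha : a ∈ lowerBounds M) : a ∈ M :=
  (hM.2 (hM.1.insert fun _ hb _ => Or.inl (ha hb)) (subset_insert _ _)).symm ▸ mem_insert _ _

section TopologicalSemilattice

variable {X : Type*} [TopologicalSpace X] [SemilatticeInf X]

theorem orderClosedTopology_of_continuousInf [T2Space X] [ContinuousInf X] :
    OrderClosedTopology X where
  isClosed_le' := by
    simp_rw [← inf_eq_left]
    exact isClosed_eq continuous_inf continuous_fst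

theorem InfClosed.closure [ContinuousInf X] {S : Set X} (hS : InfClosed S) :
    InfClosed (closure S) :=
  fun _ ha _ hb => map_mem_closure₂ continuous_inf ha hb fun _ ha' _ hb' => hS ha' hb'

theorem KComplete.exists_isGLB_mem_of_isClosed (hk : KComplete X) {T C : Set X}
    (hT : IsClosed T) (hCT : C ⊆ T) (hC : IsChain (· ≤ ·) C) (hCne : C.Nonempty) :
    ∃ a ∈ T, IsGLB C a := by
  obtain ⟨⟨a, ha, haC⟩, -⟩ := hk C hC hCne
  exact ⟨a, hT.closure_subset_iff.2 hCT haC, ha⟩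

theorem KComplete.exists_isLeast_of_isClosed (hk : KComplete X) {T : Set X} (hT : IsClosed T)
    (hTi : InfClosed T) (hTne : T.Nonempty) : ∃ a, IsLeast T a := by
  obtain ⟨M, hM⟩ : ∃ M : Set T, IsMaxChain (· ≤ ·) M := ⟨_, maxChain_spec⟩
  have hMne : M.Nonempty := hM.nonempty_iff.1 hTne.to_subtype
  set C : Set X := (↑) '' M
  have hC : IsChain (· ≤ ·) C := Subtype.mono_coe _ |>.isChain_image hM.1
  have hCT : C ⊆ T := Subtype.coe_image_subset _ _
  have hCne : C.Nonempty := hMne.image _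
  obtain ⟨a, haT, ha⟩ := hk.exists_isGLB_mem_of_isClosed hT hCT hC hCne
  refine ⟨a, haT, fun s hs => ?_⟩
  obtain ⟨d, hdT, hd⟩ := hk.exists_isGLB_mem_of_isClosed hT
    (image_subset_iff.2 fun c hc => hTi (hCT hc) hs)
    ((monotone_id.inf monotone_const).isChain_image hC) (hCne.image _)
  have hdC : d ∈ lowerBounds C := fun c hc => (hd.1 (mem_image_of_mem _ hc)).trans inf_le_left
  have hdM : (⟨d, hdT⟩ : T) ∈ M :=
    hM.mem_of_mem_lowerBounds fun m hm => hdC (mem_image_of_mem _ hm)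
  obtain ⟨c, hc⟩ := hCne
  calc a ≤ d := ha.1 (mem_image_of_mem _ hdM)
    _ ≤ c ⊓ s := hd.1 (mem_image_of_mem _ hc)
    _ ≤ s := inf_le_right

end TopologicalSemilattice

/-- Every k-complete Hausdorff topological semilattice is s-complete. -/
theorem sComplete_of_kComplete {X : Type*} [TopologicalSpace X] [T2Space X]
    [SemilatticeInf X]
    (hcont : Continuous fun p : X × X => p.1 ⊓ p.2)
    (hk : KComplete X) :
    SComplete X := by
  have : ContinuousInf X := ⟨hcont⟩
  have := orderClosedTopology_of_continuousInf (X := X)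
  refine ⟨fun S hSne hS => ?_, fun C hC hCne => ?_⟩
  · obtain ⟨a, ha⟩ := hk.exists_isLeast_of_isClosed isClosed_closure
      (InfClosed.closure fun a ha b hb => hS a ha b hb) hSne.closure
    exact ⟨a, (isGLB_iff_of_subset_of_subset_closure subset_closure subset_rfl).2 ha.isGLB,
      closure_mono (fun s hs => show s ∈ upSet S from ⟨s, hs, le_rfl⟩) ha.1⟩
  · obtain ⟨-, b, hb, hbC⟩ := hk C hC hCne
    exact ⟨b, hb, closure_mono (fun c hc => show c ∈ downSet C from ⟨c, hc, le_rfl⟩) hbC⟩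
end

section
/- If X is an s-complete Hausdorff topological semilattice, then X is c-complete: for every closed upper set F ⊆ X, every non-empty chain C ⊆ F has inf C ∈ F and sup C ∈ cl(↓C). -/
/-- `X` is c-complete if for every closed upper set `F`, every non-empty chain
`C ⊆ F` has `inf C ∈ F` and `sup C ∈ cl(↓C)`. -/
def CComplete (X : Type*) [TopologicalSpace X] [SemilatticeInf X] : Prop :=
  ∀ F : Set X, IsClosed F → IsUpperSet F →
    ∀ C : Set X, C ⊆ F → IsChain (· ≤ ·) C → C.Nonempty →
      (∃ a : X, IsGLB C a ∧ a ∈ F) ∧ (∃ b : X, IsLUB C b ∧ b ∈ closure (downSet C))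

/-- Every s-complete Hausdorff topological semilattice is c-complete. -/
theorem cComplete_of_sComplete {X : Type*} [TopologicalSpace X] [T2Space X]
    [SemilatticeInf X]
    (hcont : Continuous fun p : X × X => p.1 ⊓ p.2)
    (hs : SComplete X) :
    CComplete X := by
  intro F hF hup C hCF hchain hne
  constructor
  · obtain ⟨a, hglb, hcl⟩ := hs.1 C hne (by
      intro a ha b hb
      rcases hchain.total ha hb with h | h
      · simpa [inf_eq_left.mpr h] using ha
      · simpa [inf_eq_right.mpr h] using hb)
    refine ⟨a, hglb, ?_⟩
    have hsub : upSet C ⊆ F := by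
      rintro z ⟨c, hc, hcz⟩
      exact hup hcz (hCF hc)
    exact hF.closure_subset (closure_mono hsub hcl)
  · exact hs.2 C hchain hne
end

section
/- If all maximal chains of a Hausdorff topological semilattice X are c-complete (as subspace semilattices), then X itself is c-complete. -/
/-- A subset `M ⊆ X` is c-complete as a subspace semilattice: for every
relatively closed, relatively upper subset `F` of `M`, every non-empty chain
`C ⊆ F` has a greatest lower bound within `M` lying in `F`, and a least upper
bound within `M` lying in the relative closure of the relative lower set of
`C` in `M`. -/
def CCompleteOn {X : Type*} [TopologicalSpace X] [SemilatticeInf X] (M : Set X) : Prop :=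
  ∀ F : Set X, F ⊆ M → (∃ G : Set X, IsClosed G ∧ F = G ∩ M) →
    (∀ a ∈ F, ∀ b ∈ M, a ≤ b → b ∈ F) →
    ∀ C : Set X, C ⊆ F → IsChain (· ≤ ·) C → C.Nonempty →
      (∃ a ∈ F, a ∈ lowerBounds C ∧ ∀ b ∈ M, b ∈ lowerBounds C → b ≤ a) ∧
      (∃ b ∈ M, b ∈ upperBounds C ∧ (∀ c ∈ M, c ∈ upperBounds C → b ≤ c) ∧
        b ∈ closure (M ∩ downSet C))

/-- If all maximal chains of a Hausdorff topological semilattice are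
c-complete as subspace semilattices, then `X` is c-complete. -/
theorem cComplete_of_maximal_chains {X : Type*} [TopologicalSpace X] [T2Space X]
    [SemilatticeInf X]
    (hcont : Continuous fun p : X × X => p.1 ⊓ p.2)
    (hmax : ∀ M : Set X, IsChain (· ≤ ·) M →
      (∀ M' : Set X, IsChain (· ≤ ·) M' → M ⊆ M' → M' = M) → CCompleteOn M) :
    CComplete X := by
  intro F hFcl hFup C hCF hCch hCne
  obtain ⟨M, hMmax, hCM⟩ := hCch.exists_maxChain
  have hMch : IsChain (· ≤ ·) M := hMmax.1
  have hM : CCompleteOn M := hmax M hMch (fun M' h1 h2 => (hMmax.2 h1 h2).symm)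
  -- inf part
  have hinf1 := hM (F ∩ M) Set.inter_subset_right ⟨F, hFcl, rfl⟩
    (fun a ha b hb hab => ⟨hFup hab ha.1, hb⟩) C
    (fun c hc => ⟨hCF hc, hCM hc⟩) hCch hCne
  obtain ⟨⟨a, haF, halb, hagr⟩, _⟩ := hinf1
  -- sup part
  have hsup1 := hM M le_rfl ⟨Set.univ, isClosed_univ, (Set.univ_inter M).symm⟩
    (fun _ _ b hb _ => hb) C hCM hCch hCne
  obtain ⟨_, ⟨b, hbM, hbub, hble, hbcl⟩⟩ := hsup1
  constructor
  · refine ⟨a, ⟨halb, fun x hx => ?_⟩, haF.1⟩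
    -- use the closed upper set {y | x ⊓ y = x} = ↑x
    have hGcl : IsClosed {y : X | x ⊓ y = x} := by
      have : Continuous fun y : X => x ⊓ y :=
        hcont.comp (continuous_const.prodMk continuous_id)
      exact isClosed_eq this continuous_const
    have hGeq : {y : X | x ⊓ y = x} = {y : X | x ≤ y} := by
      ext y; exact inf_eq_left
    have h2 := hM ({y : X | x ≤ y} ∩ M) Set.inter_subset_right
      ⟨{y : X | x ⊓ y = x}, hGcl, by rw [hGeq]⟩
      (fun u hu v hv huv => ⟨le_trans hu.1 huv, hv⟩) C
      (fun c hc => ⟨hx hc, hCM hc⟩) hCch hCne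
    obtain ⟨⟨a', ha'F, ha'lb, ha'gr⟩, _⟩ := h2
    have : a' = a := le_antisymm (hagr a' ha'F.2 ha'lb) (ha'gr a haF.2 halb)
    exact this ▸ ha'F.1
  · refine ⟨b, ⟨hbub, fun x hx => ?_⟩, closure_mono Set.inter_subset_right hbcl⟩
    have hTcl : IsClosed {y : X | x ⊓ y = y} := by
      have : Continuous fun y : X => x ⊓ y :=
        hcont.comp (continuous_const.prodMk continuous_id)
      exact isClosed_eq this continuous_id
    have hsub : M ∩ downSet C ⊆ {y : X | x ⊓ y = y} := by
      rintro y ⟨-, c, hc, hyc⟩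
      exact inf_eq_right.mpr (le_trans hyc (hx hc))
    have : b ∈ {y : X | x ⊓ y = y} := hTcl.closure_subset (closure_mono hsub hbcl)
    exact le_of_inf_eq (inf_comm x b ▸ this)
end
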